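/- arXiv:2201.10892 — 3 statements merged into one kernel-verified Lean document; each statement's English description precedes it below -/
import Mathlib

section
/- Let n ≥ 5 and let W be a self-annihilating subspace of Λ²(ℝⁿ) such that there is no vector a ∈ ℝⁿ for which every element of W is of the form a ∧ v. Then dim W = 3 holds if and only if W is the linear span of the three 2-forms x₁ ∧ x₂, x₂ ∧ x₃, x₃ ∧ x₁ for some linearly independent vectors x₁, x₂, x₃ ∈ ℝⁿ. -/
/-!
A 2-form `w` with `w ∧ w = 0` is decomposable when `2 ≠ 0`: for a contraction
`ι_f := contractLeft f` with `m := ι_f w ≠ 0`, the derivation rule gives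
`0 = ι_f (w ∧ w) = 2 m ∧ w`, and contracting `m ∧ w = 0` with a form `g` with `g m = 1` yields
`w = m ∧ ι_g w`. So a self-annihilating `W` consists of forms `a ∧ b`, each determined up to
scale by the plane `⟨a, b⟩`, and two such forms have product zero exactly when their planes meet.

A basis of a three-dimensional `W` thus gives three pairwise meeting planes, and they share no
line, since otherwise `W ⊆ z ∧ V`. Points `c, u, v` of the three pairwise intersections are
linearly independent, each plane contains two of them, so `span {c ∧ u, u ∧ v, v ∧ c} ⊆ W`, with
equality because the left side is three-dimensional: left multiplication by each of `c, u, v`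
kills exactly the two generators containing it.
-/

open Submodule

namespace ExteriorAlgebra

section CommRing

variable {R M : Type*} [CommRing R] [AddCommGroup M] [Module R M]

theorem ι_mul_ι_comm (x y : M) : ι R x * ι R y = -(ι R y * ι R x) :=
  eq_neg_of_add_eq_zero_left (ι_add_mul_swap x y)

theorem ιMulti_fin_two (a b : M) : ιMulti R 2 ![a, b] = ι R a * ι R b := by
  simp [ιMulti_succ_apply, Matrix.vecTail]

theorem ι_mul_ι_mem_exteriorPower_two (a b : M) : ι R a * ι R b ∈ ⋀[R]^2 M :=
  ιMulti_fin_two (R := R) a b ▸ ιMulti_range R 2 ⟨_, rfl⟩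

@[elab_as_elim]
theorem exteriorPower_two_induction {P : ExteriorAlgebra R M → Prop} (zero : P 0)
    (add : ∀ x y, P x → P y → P (x + y)) (smul : ∀ (r : R) x, P x → P (r • x))
    (ι_mul_ι : ∀ a b, P (ι R a * ι R b)) {w : ExteriorAlgebra R M} (hw : w ∈ ⋀[R]^2 M) :
    P w := by
  rw [← ιMulti_span_fixedDegree] at hw
  induction hw using Submodule.span_induction with
  | mem x hx =>
    obtain ⟨v, rfl⟩ := hx
    simpa [ιMulti_succ_apply, Matrix.vecTail] using ι_mul_ι (v 0) (v 1)
  | zero => exact zero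
  | add x y _ _ hx hy => exact add x y hx hy
  | smul r x _ hx => exact smul r x hx

theorem ι_mul_comm_of_mem_exteriorPower_two {w : ExteriorAlgebra R M} (hw : w ∈ ⋀[R]^2 M)
    (v : M) : ι R v * w = w * ι R v := by
  refine exteriorPower_two_induction (by simp)
    (fun x y hx hy => ?_) (fun r x hx => ?_) (fun a b => ?_) hw
  · rw [mul_add, add_mul, hx, hy]
  · rw [mul_smul_comm, smul_mul_assoc, hx]
  · rw [← mul_assoc, ι_mul_ι_comm v a, neg_mul, mul_assoc, ι_mul_ι_comm v b, mul_neg, neg_neg,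
      ← mul_assoc]

noncomputable abbrev contractLeft (f : Module.Dual R M) :
    ExteriorAlgebra R M →ₗ[R] ExteriorAlgebra R M :=
  CliffordAlgebra.contractLeft (Q := 0) f

theorem contractLeft_ι (f : Module.Dual R M) (x : M) :
    contractLeft f (ι R x) = algebraMap R _ (f x) :=
  CliffordAlgebra.contractLeft_ι _ f x

theorem contractLeft_ι_mul (f : Module.Dual R M) (a : M) (b : ExteriorAlgebra R M) :
    contractLeft f (ι R a * b) = f a • b - ι R a * contractLeft f b :=
  CliffordAlgebra.contractLeft_ι_mul f a b

theorem contractLeft_ι_mul_ι (f : Module.Dual R M) (a b : M) :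
    contractLeft f (ι R a * ι R b) = f a • ι R b - f b • ι R a := by
  rw [contractLeft_ι_mul, contractLeft_ι, Algebra.algebraMap_eq_smul_one, mul_smul_comm, mul_one]

theorem exists_contractLeft_eq_ι (f : Module.Dual R M) {w : ExteriorAlgebra R M}
    (hw : w ∈ ⋀[R]^2 M) : ∃ m, contractLeft f w = ι R m := by
  refine exteriorPower_two_induction ⟨0, by simp⟩
    (fun x y hx hy => ?_) (fun r x hx => ?_) (fun a b => ?_) hw
  · obtain ⟨mx, hx⟩ := hx
    obtain ⟨my, hy⟩ := hy
    exact ⟨mx + my, by rw [map_add, hx, hy, map_add]⟩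
  · obtain ⟨m, hm⟩ := hx
    exact ⟨r • m, by rw [map_smul, hm, map_smul]⟩
  · exact ⟨f a • b - f b • a, by simp [contractLeft_ι_mul_ι]⟩

theorem contractLeft_mul_of_mem_exteriorPower_two (f : Module.Dual R M)
    {w : ExteriorAlgebra R M} (hw : w ∈ ⋀[R]^2 M) (y : ExteriorAlgebra R M) :
    contractLeft f (w * y) = contractLeft f w * y + w * contractLeft f y := by
  refine exteriorPower_two_induction (by simp)
    (fun x z hx hz => ?_) (fun r x hx => ?_) (fun a b => ?_) hw
  · simp only [add_mul, map_add, hx, hz]; abel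
  · simp only [smul_mul_assoc, map_smul, hx, smul_add]
  · rw [mul_assoc, contractLeft_ι_mul, contractLeft_ι_mul, contractLeft_ι_mul_ι]
    simp only [mul_sub, sub_mul, smul_mul_assoc, mul_smul_comm, mul_assoc]
    abel

theorem sum_ι_mul_contractLeft_coord {I : Type*} [Fintype I] (b : Module.Basis I R M)
    {w : ExteriorAlgebra R M} (hw : w ∈ ⋀[R]^2 M) :
    ∑ i, ι R (b i) * contractLeft (b.coord i) w = (2 : R) • w := by
  refine exteriorPower_two_induction (by simp)
    (fun x y hx hy => ?_) (fun r x hx => ?_) (fun x y => ?_) hw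
  · simp only [map_add, mul_add, Finset.sum_add_distrib, hx, hy, smul_add]
  · simp only [map_smul, mul_smul_comm, ← Finset.smul_sum, hx, smul_comm r]
  · have hsum : ∀ z : M, ∑ i, b.coord i z • ι R (b i) = ι R z := fun z => by
      simp_rw [Module.Basis.coord_apply, ← map_smul, ← map_sum, b.sum_repr]
    simp only [contractLeft_ι_mul_ι, mul_sub, mul_smul_comm, Finset.sum_sub_distrib,
      ← Finset.sum_mul, ← smul_mul_assoc, hsum]
    rw [ι_mul_ι_comm y x, sub_neg_eq_add, ← two_smul R, smul_mul_assoc]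

end CommRing

section Field

variable {K V : Type*} [Field K] [AddCommGroup V] [Module K V]

theorem ιMulti_ne_zero_of_linearIndependent {k : ℕ} {v : Fin k → V}
    (hv : LinearIndependent K v) : ιMulti K k v ≠ 0 := by
  have h := (exteriorPower.ιMulti_family_linearIndependent_field (n := k) hv).ne_zero
    (Set.powersetCard.ofFinEmbEquiv (RelEmbedding.refl (· ≤ · : Fin k → Fin k → Prop)))
  rw [exteriorPower.ιMulti_family, Equiv.symm_apply_apply] at h
  contrapose! h
  ext1
  simpa using h

theorem ιMulti_eq_zero_iff {k : ℕ} {v : Fin k → V} :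
    ιMulti K k v = 0 ↔ ¬LinearIndependent K v :=
  ⟨fun h hv => ιMulti_ne_zero_of_linearIndependent hv h, (ιMulti K k).map_linearDependent v⟩

theorem ιMulti_mul_ιMulti_eq_zero_iff {m n : ℕ} {u : Fin m → V} {v : Fin n → V}
    (hu : ιMulti K m u ≠ 0) (hv : ιMulti K n v ≠ 0) :
    ιMulti K m u * ιMulti K n v = 0 ↔ ¬Disjoint (span K (Set.range u)) (span K (Set.range v)) := by
  rw [ne_eq, ιMulti_eq_zero_iff, not_not] at hu hv
  rw [ιMulti_mul_ιMulti, ιMulti_eq_zero_iff,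
    ← linearIndependent_equiv' finSumFinEquiv Fin.append_comp_sumElim, linearIndependent_sum]
  simp [hu, hv]

theorem ι_mul_ι_mul_ι_mul_ι_eq_zero_iff {a b c d : V} (hab : ι K a * ι K b ≠ 0)
    (hcd : ι K c * ι K d ≠ 0) :
    ι K a * ι K b * (ι K c * ι K d) = 0 ↔ ¬Disjoint (span K {a, b}) (span K {c, d}) := by
  rw [← ιMulti_fin_two] at hab hcd ⊢
  rw [← ιMulti_fin_two, ιMulti_mul_ιMulti_eq_zero_iff hab hcd, Matrix.range_cons_cons_empty,
    Matrix.range_cons_cons_empty]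

theorem eq_zero_of_forall_contractLeft_eq_zero [FiniteDimensional K V] [NeZero (2 : K)]
    {w : ExteriorAlgebra K V} (hw : w ∈ ⋀[K]^2 V) (h : ∀ f, contractLeft f w = 0) : w = 0 := by
  have h2w := sum_ι_mul_contractLeft_coord (Module.finBasis K V) hw
  simp only [h, mul_zero, Finset.sum_const_zero] at h2w
  exact (smul_eq_zero.mp h2w.symm).resolve_left two_ne_zero

theorem exists_eq_ι_mul_ι_of_ι_mul_eq_zero {w : ExteriorAlgebra K V} (hw : w ∈ ⋀[K]^2 V)
    {m : V} (hm : m ≠ 0) (h : ι K m * w = 0) : ∃ v, w = ι K m * ι K v := by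
  obtain ⟨g, hg⟩ := Module.Projective.exists_dual_eq_one K hm
  obtain ⟨v, hv⟩ := exists_contractLeft_eq_ι g hw
  have hgw := contractLeft_ι_mul g m w
  rw [h, map_zero, hg, one_smul, hv] at hgw
  exact ⟨v, sub_eq_zero.mp hgw.symm⟩

theorem exists_eq_ι_mul_ι_of_mul_self_eq_zero [FiniteDimensional K V] [NeZero (2 : K)]
    {w : ExteriorAlgebra K V} (hw : w ∈ ⋀[K]^2 V) (hsq : w * w = 0) :
    ∃ a b, w = ι K a * ι K b := by
  by_cases hw0 : w = 0
  · exact ⟨0, 0, by simp [hw0]⟩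
  obtain ⟨f, hf⟩ : ∃ f, contractLeft f w ≠ 0 := by
    by_contra! h
    exact hw0 (eq_zero_of_forall_contractLeft_eq_zero hw h)
  obtain ⟨m, hm⟩ := exists_contractLeft_eq_ι f hw
  have hmw : ι K m * w = 0 := by
    have h2 := contractLeft_mul_of_mem_exteriorPower_two f hw w
    rw [hsq, map_zero, hm, ← ι_mul_comm_of_mem_exteriorPower_two hw m, ← two_smul K] at h2
    exact (smul_eq_zero.mp h2.symm).resolve_left two_ne_zero
  obtain ⟨v, hv⟩ := exists_eq_ι_mul_ι_of_ι_mul_eq_zero hw (by rintro rfl; simp_all) hmw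
  exact ⟨m, v, hv⟩

variable (K) in
/-- `a ∧ V`, the analogue of the star of all sets through a fixed point. -/
noncomputable def starSubmodule (a : V) : Submodule K (ExteriorAlgebra K V) :=
  LinearMap.range (LinearMap.mulLeft K (ι K a) ∘ₗ ι K)

theorem mem_starSubmodule {a : V} {w : ExteriorAlgebra K V} :
    w ∈ starSubmodule K a ↔ ∃ v, ι K a * ι K v = w := by
  simp [starSubmodule]

theorem ι_mul_ι_mem_starSubmodule_of_mem_span_pair {a b z : V} (hz : z ≠ 0)
    (hmem : z ∈ span K {a, b}) : ι K a * ι K b ∈ starSubmodule K z := by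
  have hdep : ¬LinearIndependent K ![z, a, b] := by
    rw [Matrix.vecCons, linearIndependent_finCons, Matrix.range_cons_cons_empty]
    exact fun h => h.2 hmem
  have hzab : ι K z * (ι K a * ι K b) = 0 := by
    simpa [ιMulti_succ_apply, Matrix.vecTail] using ιMulti_eq_zero_iff.mpr hdep
  obtain ⟨v, hv⟩ := exists_eq_ι_mul_ι_of_ι_mul_eq_zero (ι_mul_ι_mem_exteriorPower_two a b) hz hzab
  exact mem_starSubmodule.mpr ⟨v, hv.symm⟩

theorem ι_mul_ι_mem_span_singleton_of_mem_span_pair {a b u v : V} (hu : u ∈ span K {a, b})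
    (hv : v ∈ span K {a, b}) : ι K u * ι K v ∈ K ∙ (ι K a * ι K b) := by
  obtain ⟨p, q, rfl⟩ := mem_span_pair.mp hu
  obtain ⟨r, s, rfl⟩ := mem_span_pair.mp hv
  refine mem_span_singleton.mpr ⟨p * s - q * r, ?_⟩
  simp only [map_add, map_smul, add_mul, mul_add, smul_mul_assoc, mul_smul_comm, ι_sq_zero,
    smul_zero, add_zero, zero_add, ι_mul_ι_comm b a]
  module

theorem linearIndependent_of_mem_inf {P₀ P₁ P₂ : Submodule K V} (h : P₀ ⊓ P₁ ⊓ P₂ = ⊥)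
    {c u v : V} (hc : c ∈ P₀ ⊓ P₁) (hu : u ∈ P₀ ⊓ P₂) (hv : v ∈ P₁ ⊓ P₂) (hc0 : c ≠ 0)
    (hu0 : u ≠ 0) (hv0 : v ≠ 0) : LinearIndependent K ![c, u, v] := by
  have hc₂ : c ∉ P₂ := fun hc₂ => hc0 ((mem_bot K).mp (h ▸ ⟨hc, hc₂⟩))
  have hu₁ : u ∉ P₁ := fun hu₁ => hu0 ((mem_bot K).mp (h ▸ ⟨⟨hu.1, hu₁⟩, hu.2⟩))
  have huv : LinearIndependent K ![u, v] := by
    refine linearIndependent_finCons.mpr ⟨linearIndependent_unique_iff.mpr hv0, fun hu' => hu₁ ?_⟩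
    exact span_le.mpr (by simpa using hv.1) hu'
  refine linearIndependent_finCons.mpr ⟨huv, fun hc' => hc₂ ?_⟩
  exact span_le.mpr (by simp [Set.insert_subset_iff, hu.2, hv.2]) hc'

theorem linearIndependent_triangle {x₁ x₂ x₃ : V} (hx : LinearIndependent K ![x₁, x₂, x₃]) :
    LinearIndependent K ![ι K x₁ * ι K x₂, ι K x₂ * ι K x₃, ι K x₃ * ι K x₁] := by
  set x := ![x₁, x₂, x₃]
  have hcyc : ![ι K x₁ * ι K x₂, ι K x₂ * ι K x₃, ι K x₃ * ι K x₁] =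
      fun i => ι K (x i) * ι K (x (i + 1)) := by
    funext i; fin_cases i <;> rfl
  have hmul (k i j : Fin 3) :
      ι K (x k) * (ι K (x i) * ι K (x j)) = 0 ↔ ¬Function.Injective ![k, i, j] := by
    have hprod : ι K (x k) * (ι K (x i) * ι K (x j)) = ιMulti K 3 (x ∘ ![k, i, j]) := by
      simp [ιMulti_succ_apply, Matrix.vecTail]
    rw [hprod, ιMulti_eq_zero_iff, not_iff_not]
    exact ⟨fun h => h.injective.of_comp, hx.comp _⟩
  have hdiag : ∀ j : Fin 3, Function.Injective ![j + 2, j, j + 1] := by decide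
  have hoff : ∀ i j : Fin 3, i ≠ j → ¬Function.Injective ![j + 2, i, i + 1] := by decide
  rw [hcyc, Fintype.linearIndependent_iff]
  intro t ht j
  -- left multiplication by `x (j + 2)` kills every generator but the `j`-th
  have hj := congrArg (ι K (x (j + 2)) * ·) ht
  simp only [mul_zero, Finset.mul_sum, mul_smul_comm] at hj
  rw [Finset.sum_eq_single j (fun i _ hij => by rw [(hmul _ _ _).mpr (hoff i j hij), smul_zero])
    (by simp)] at hj
  exact (smul_eq_zero.mp hj).resolve_right ((hmul _ _ _).not.mpr (not_not.mpr (hdiag j)))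

theorem finrank_span_triangle {x₁ x₂ x₃ : V} (hx : LinearIndependent K ![x₁, x₂, x₃]) :
    Module.finrank K (span K {ι K x₁ * ι K x₂, ι K x₂ * ι K x₃, ι K x₃ * ι K x₁}) = 3 := by
  have hrange : Set.range ![ι K x₁ * ι K x₂, ι K x₂ * ι K x₃, ι K x₃ * ι K x₁] =
      {ι K x₁ * ι K x₂, ι K x₂ * ι K x₃, ι K x₃ * ι K x₁} := by
    rw [Matrix.range_cons, Matrix.range_cons_cons_empty, Set.singleton_union]
  rw [← hrange, finrank_span_eq_card (linearIndependent_triangle hx), Fintype.card_fin]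

theorem span_le_starSubmodule {I : Type*} {x y : I → V} {z : V} (hz : z ≠ 0)
    (h : ∀ i, z ∈ span K {x i, y i}) :
    span K (Set.range fun i => ι K (x i) * ι K (y i)) ≤ starSubmodule K z :=
  span_le.mpr <| Set.range_subset_iff.mpr fun i =>
    ι_mul_ι_mem_starSubmodule_of_mem_span_pair hz (h i)

theorem exists_triangle_le_span {x y : Fin 3 → V} (hne : ∀ i, ι K (x i) * ι K (y i) ≠ 0)
    (hann : ∀ i j, ι K (x i) * ι K (y i) * (ι K (x j) * ι K (y j)) = 0)
    (hstar : ∀ z, ¬span K (Set.range fun i => ι K (x i) * ι K (y i)) ≤ starSubmodule K z) :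
    ∃ c u v : V, LinearIndependent K ![c, u, v] ∧
      span K {ι K c * ι K u, ι K u * ι K v, ι K v * ι K c} ≤
        span K (Set.range fun i => ι K (x i) * ι K (y i)) := by
  set P : Fin 3 → Submodule K V := fun i => span K {x i, y i}
  have hmeet (i j : Fin 3) : P i ⊓ P j ≠ ⊥ := by
    rw [ne_eq, ← disjoint_iff, ← ι_mul_ι_mul_ι_mul_ι_eq_zero_iff (hne i) (hne j)]
    exact hann i j
  have hcommon : P 0 ⊓ P 1 ⊓ P 2 = ⊥ := by
    by_contra h
    obtain ⟨z, hzP, hz⟩ := (Submodule.ne_bot_iff _).mp h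
    refine hstar z (span_le_starSubmodule hz fun i => ?_)
    fin_cases i
    exacts [hzP.1.1, hzP.1.2, hzP.2]
  obtain ⟨c, hc, hc0⟩ := (Submodule.ne_bot_iff _).mp (hmeet 0 1)
  obtain ⟨u, hu, hu0⟩ := (Submodule.ne_bot_iff _).mp (hmeet 0 2)
  obtain ⟨v, hv, hv0⟩ := (Submodule.ne_bot_iff _).mp (hmeet 1 2)
  refine ⟨c, u, v, linearIndependent_of_mem_inf hcommon hc hu hv hc0 hu0 hv0, ?_⟩
  have hplane {i : Fin 3} {p q : V} (hp : p ∈ P i) (hq : q ∈ P i) :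
      ι K p * ι K q ∈ span K (Set.range fun i => ι K (x i) * ι K (y i)) :=
    (span_singleton_le_iff_mem _ _).mpr (subset_span (Set.mem_range_self i))
      (ι_mul_ι_mem_span_singleton_of_mem_span_pair hp hq)
  rw [span_le]
  rintro _ (rfl | rfl | rfl)
  exacts [hplane hc.1 hu.1, hplane hu.2 hv.2, hplane hv.1 hc.2]

theorem exists_triangle_of_finrank_eq_three [FiniteDimensional K V] [NeZero (2 : K)]
    {W : Submodule K (ExteriorAlgebra K V)} (hW2 : W ≤ ⋀[K]^2 V)
    (hann : ∀ w₁ ∈ W, ∀ w₂ ∈ W, w₁ * w₂ = 0) (hstar : ∀ a, ¬W ≤ starSubmodule K a)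
    (h3 : Module.finrank K W = 3) :
    ∃ x₁ x₂ x₃ : V, LinearIndependent K ![x₁, x₂, x₃] ∧
      W = span K {ι K x₁ * ι K x₂, ι K x₂ * ι K x₃, ι K x₃ * ι K x₁} := by
  have : FiniteDimensional K W := Module.finite_of_finrank_pos (by omega)
  let b := Module.finBasisOfFinrankEq K W h3
  have hbW (i : Fin 3) : (b i : ExteriorAlgebra K V) ∈ W := (b i).2
  choose x y hxy using fun i =>
    exists_eq_ι_mul_ι_of_mul_self_eq_zero (hW2 (hbW i)) (hann _ (hbW i) _ (hbW i))
  have hWxy : W = span K (Set.range fun i => ι K (x i) * ι K (y i)) :=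
    calc W = Submodule.map W.subtype (span K (Set.range b)) := by rw [b.span_eq, map_subtype_top]
      _ = _ := by rw [map_span, ← Set.range_comp]; simp only [Function.comp_def, ← hxy]; rfl
  obtain ⟨c, u, v, hli, hle⟩ := exists_triangle_le_span
    (fun i => hxy i ▸ by simpa using b.ne_zero i)
    (fun i j => hxy i ▸ hxy j ▸ hann _ (hbW i) _ (hbW j)) (hWxy ▸ hstar)
  exact ⟨c, u, v, hli, (eq_of_le_of_finrank_eq (hWxy ▸ hle)
    (by rw [finrank_span_triangle hli, h3])).symm⟩

end Field

end ExteriorAlgebra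

open ExteriorAlgebra in
theorem hilton_milner_two_forms_eq_iff_general (n : ℕ)
    (W : Submodule ℝ (ExteriorAlgebra ℝ (Fin n → ℝ)))
    (hW2 : W ≤ ⋀[ℝ]^2 (Fin n → ℝ))
    (hann : ∀ w₁ ∈ W, ∀ w₂ ∈ W, w₁ * w₂ = 0)
    (hnota : ¬ ∃ a : Fin n → ℝ, ∀ w ∈ W, ∃ v : Fin n → ℝ,
      w = ExteriorAlgebra.ι ℝ a * ExteriorAlgebra.ι ℝ v) :
    Module.finrank ℝ W = 3 ↔
      ∃ x₁ x₂ x₃ : Fin n → ℝ, LinearIndependent ℝ ![x₁, x₂, x₃] ∧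
        W = Submodule.span ℝ
          {ExteriorAlgebra.ι ℝ x₁ * ExteriorAlgebra.ι ℝ x₂,
           ExteriorAlgebra.ι ℝ x₂ * ExteriorAlgebra.ι ℝ x₃,
           ExteriorAlgebra.ι ℝ x₃ * ExteriorAlgebra.ι ℝ x₁} := by
  have hstar (a : Fin n → ℝ) : ¬W ≤ starSubmodule ℝ a := fun hle =>
    hnota ⟨a, fun w hw => (mem_starSubmodule.mp (hle hw)).imp fun _ h => h.symm⟩
  constructor
  · exact exists_triangle_of_finrank_eq_three hW2 hann hstar
  · rintro ⟨x₁, x₂, x₃, hx, rfl⟩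
    exact finrank_span_triangle hx

/-- **Hilton–Milner for 2-forms (equality case).** If `n ≥ 5` and `W` is a
self-annihilating subspace of `Λ²(ℝⁿ)` such that there is no vector `a ∈ ℝⁿ`
with every element of `W` of the form `a ∧ v`, then `dim W = 3` holds if and
only if `W` is the span of `x₁ ∧ x₂, x₂ ∧ x₃, x₃ ∧ x₁` for some linearly
independent vectors `x₁, x₂, x₃ ∈ ℝⁿ`. -/
theorem hilton_milner_two_forms_eq_iff (n : ℕ) (hn : 5 ≤ n)
    (W : Submodule ℝ (ExteriorAlgebra ℝ (Fin n → ℝ)))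
    (hW2 : W ≤ ⋀[ℝ]^2 (Fin n → ℝ))
    (hann : ∀ w₁ ∈ W, ∀ w₂ ∈ W, w₁ * w₂ = 0)
    (hnota : ¬ ∃ a : Fin n → ℝ, ∀ w ∈ W, ∃ v : Fin n → ℝ,
      w = ExteriorAlgebra.ι ℝ a * ExteriorAlgebra.ι ℝ v) :
    Module.finrank ℝ W = 3 ↔
      ∃ x₁ x₂ x₃ : Fin n → ℝ, LinearIndependent ℝ ![x₁, x₂, x₃] ∧
        W = Submodule.span ℝ
          {ExteriorAlgebra.ι ℝ x₁ * ExteriorAlgebra.ι ℝ x₂,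
           ExteriorAlgebra.ι ℝ x₂ * ExteriorAlgebra.ι ℝ x₃,
           ExteriorAlgebra.ι ℝ x₃ * ExteriorAlgebra.ι ℝ x₁} :=
  hilton_milner_two_forms_eq_iff_general n W hW2 hann hnota
end

section
/- (Erdős–Ko–Rado uniqueness) Suppose r < n/2. If 𝓕 is an intersecting family of r-element subsets of {1, …, n} with |𝓕| = C(n−1, r−1), then all the sets in 𝓕 share a common element. -/
/-!
Shift towards a fixed `j ∈ U`: the UV-compression `𝓒 {x} {j}` replaces `j` by `x` wherever
possible. It preserves sizes and the intersecting property and strictly lowers the number of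
members containing `j`, so we may induct on that number.

If a shifted family `𝓒 {x} {j} 𝒜` is a star at `a ≠ x`, so is `𝒜`. If it is a star at `x`, it is
the full star at `x`; then the sets `t ∌ x, j` with `insert j t ∈ 𝒜` are closed under taking
disjoint `t'` (the set `insert x t'` must be the shift of `insert j t'`), so by connectivity of
the Kneser graph either there are none, and `𝒜` is a star at `x`, or there are all of them, and
`𝒜` is a star at `j`.

If no shift changes `𝒜`, its link at `j` is intersecting. Bounding the link and the members
avoiding `j` by Erdős–Ko–Rado, Pascal's rule forces the link to be extremal, so by induction on
the ground set it is the full star at some `a`, and every member of `𝒜` then contains `a`.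
-/

open Finset
open scoped FinsetFamily

variable {α : Type*} [DecidableEq α]

namespace Finset

theorem exists_mem_powersetCard_disjoint {s U : Finset α} {k : ℕ} (h : #s + k ≤ #U) :
    ∃ t ∈ U.powersetCard k, Disjoint s t := by
  obtain ⟨t, ht, htk⟩ := exists_subset_card_eq (show k ≤ #(U \ s) by
    have := le_card_sdiff s U
    omega)
  exact ⟨t, mem_powersetCard.2 ⟨ht.trans sdiff_subset, htk⟩,
    (disjoint_of_subset_left ht sdiff_disjoint).symm⟩

theorem powersetCard_induction_on_disjoint {U : Finset α} {k : ℕ} (hU : 2 * k < #U)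
    {p : Finset α → Prop}
    (step : ∀ s ∈ U.powersetCard k, ∀ t ∈ U.powersetCard k, Disjoint s t → p s → p t)
    {s₀ : Finset α} (hs₀ : s₀ ∈ U.powersetCard k) (h₀ : p s₀) :
    ∀ t ∈ U.powersetCard k, p t := by
  -- Two `k`-sets whose union has at most `k + 1` elements have a common disjoint neighbour.
  have swap :
      ∀ s ∈ U.powersetCard k, ∀ t ∈ U.powersetCard k, #(s ∪ t) ≤ k + 1 → p s → p t := by
    intro s hs t ht hst hps
    obtain ⟨g, hg, hdisj⟩ := exists_mem_powersetCard_disjoint (s := s ∪ t) (U := U) (k := k)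
      (by omega)
    exact step g hg t ht (disjoint_union_left.1 hdisj).2.symm
      (step s hs g hg (disjoint_union_left.1 hdisj).1 hps)
  suffices ∀ d, ∀ t ∈ U.powersetCard k, #(t \ s₀) = d → p t from fun t ht ↦ this _ t ht rfl
  intro d
  induction d with
  | zero =>
    intro t ht hd
    refine swap s₀ hs₀ t ht ?_ h₀
    rw [union_comm, ← card_sdiff_add_card, hd, (mem_powersetCard.1 hs₀).2]
    omega
  | succ d ih =>
    intro t ht hd
    obtain ⟨y, hy⟩ : (t \ s₀).Nonempty := by rw [← card_pos]; omega
    obtain ⟨z, hz⟩ : (s₀ \ t).Nonempty := by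
      rw [← card_pos, card_sdiff_comm ((mem_powersetCard.1 hs₀).2.trans
        (mem_powersetCard.1 ht).2.symm), hd]
      omega
    rw [mem_sdiff] at hy hz
    have ht' : insert z (t.erase y) ∈ U.powersetCard k := by
      rw [mem_powersetCard] at ht hs₀ ⊢
      refine ⟨insert_subset (hs₀.1 hz.1) ((erase_subset y t).trans ht.1), ?_⟩
      rw [card_insert_of_notMem (fun h ↦ hz.2 (mem_of_mem_erase h)), card_erase_of_mem hy.1,
        ht.2]
      have : 0 < k := ht.2 ▸ card_pos.2 ⟨y, hy.1⟩
      omega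
    refine swap _ ht' t ht ?_ (ih _ ht' ?_)
    · calc #(insert z (t.erase y) ∪ t) ≤ #(insert z t) :=
            card_le_card (union_subset (insert_subset_insert z (erase_subset y t))
              (subset_insert z t))
        _ ≤ k + 1 := (card_insert_le z t).trans (by rw [(mem_powersetCard.1 ht).2])
    · have : insert z (t.erase y) \ s₀ = (t \ s₀).erase y := by
        ext w
        simp only [mem_sdiff, mem_insert, mem_erase]
        grind
      rw [this, card_erase_of_mem (mem_sdiff.2 hy), hd]
      rfl

theorem erdos_ko_rado_of_subset_powersetCard {U : Finset α} {𝒜 : Finset (Finset α)} {r : ℕ}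
    (h𝒜U : 𝒜 ⊆ U.powersetCard r) (h𝒜 : (𝒜 : Set (Finset α)).Intersecting)
    (hr : 2 * r ≤ #U) : #𝒜 ≤ (#U - 1).choose (r - 1) := by
  let e : U ↪ Fin #U := U.equivFin.toEmbedding
  let φ : Finset α → Finset (Fin #U) := fun s ↦ (s.subtype (· ∈ U)).map e
  have mem_φ : ∀ {s : Finset α} {y : α} (hy : y ∈ U), e ⟨y, hy⟩ ∈ φ s ↔ y ∈ s := by
    intro s y hy
    simp [φ, e]
  have hinj : Set.InjOn φ 𝒜 := by
    intro s hs t ht hst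
    have hsU := (mem_powersetCard.1 (h𝒜U hs)).1
    have htU := (mem_powersetCard.1 (h𝒜U ht)).1
    ext y
    by_cases hy : y ∈ U
    · rw [← mem_φ hy, ← mem_φ hy, hst]
    · exact iff_of_false (fun h ↦ hy (hsU h)) (fun h ↦ hy (htU h))
  rw [← card_image_of_injOn hinj]
  refine erdos_ko_rado ?_ ?_ (by omega)
  · simp only [coe_image]
    rintro _ ⟨s, hs, rfl⟩ _ ⟨t, ht, rfl⟩ hst
    refine h𝒜 hs ht (disjoint_left.2 fun y hys hyt ↦ ?_)
    have hyU := (mem_powersetCard.1 (h𝒜U hs)).1 hys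
    exact disjoint_left.1 hst ((mem_φ hyU).2 hys) ((mem_φ hyU).2 hyt)
  · simp only [coe_image]
    rintro _ ⟨s, hs, rfl⟩
    obtain ⟨hsU, hsr⟩ := mem_powersetCard.1 (h𝒜U hs)
    simp [φ, card_subtype, filter_true_of_mem hsU, hsr]

theorem eq_filter_mem_of_card_eq_choose {U : Finset α} {𝒜 : Finset (Finset α)} {r : ℕ}
    {a : α} (haU : a ∈ U) (hr : 1 ≤ r) (h𝒜U : 𝒜 ⊆ U.powersetCard r) (ha : ∀ s ∈ 𝒜, a ∈ s)
    (hcard : #𝒜 = (#U - 1).choose (r - 1)) : 𝒜 = {s ∈ U.powersetCard r | a ∈ s} := by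
  refine eq_of_subset_of_card_le (fun s hs ↦ mem_filter.2 ⟨h𝒜U hs, ha s hs⟩) ?_
  have := card_filter_powersetCard_subset {a} U r (singleton_subset_iff.2 haU)
    (by rwa [card_singleton])
  simp only [singleton_subset_iff, card_singleton] at this
  rw [this, hcard]

variable {U : Finset α} {𝒜 : Finset (Finset α)} {r : ℕ} {j : α}

theorem memberSubfamily_subset_powersetCard (h𝒜U : 𝒜 ⊆ U.powersetCard r) :
    𝒜.memberSubfamily j ⊆ (U.erase j).powersetCard (r - 1) := by
  intro s hs
  rw [mem_memberSubfamily] at hs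
  obtain ⟨hsU, hsr⟩ := mem_powersetCard.1 (h𝒜U hs.1)
  refine mem_powersetCard.2 ⟨fun y hy ↦ mem_erase.2 ⟨ne_of_mem_of_not_mem hy hs.2,
    hsU (mem_insert_of_mem hy)⟩, ?_⟩
  rw [← hsr, card_insert_of_notMem hs.2, Nat.add_sub_cancel]

theorem nonMemberSubfamily_subset_powersetCard (h𝒜U : 𝒜 ⊆ U.powersetCard r) :
    𝒜.nonMemberSubfamily j ⊆ (U.erase j).powersetCard r := by
  intro s hs
  rw [mem_nonMemberSubfamily] at hs
  obtain ⟨hsU, hsr⟩ := mem_powersetCard.1 (h𝒜U hs.1)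
  exact mem_powersetCard.2
    ⟨fun y hy ↦ mem_erase.2 ⟨ne_of_mem_of_not_mem hy hs.2, hsU hy⟩, hsr⟩

end Finset

namespace UV

variable {x j a : α} {s : Finset α} {𝒜 : Finset (Finset α)}

theorem compress_singleton_of_notMem (hj : j ∉ s) : compress {x} {j} s = s :=
  if_neg fun h ↦ hj (singleton_subset_iff.1 h.2)

theorem compress_singleton_insert (hx : x ∉ insert j s) (hj : j ∉ s) :
    compress {x} {j} (insert j s) = insert x s := by
  rw [compress_of_disjoint_of_le (disjoint_singleton_left.2 hx)
    (singleton_subset_iff.2 (mem_insert_self j s))]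
  ext y
  simp only [sup_eq_union, mem_sdiff, mem_union, mem_insert, mem_singleton]
  grind

theorem mem_of_mem_compress_singleton (hax : a ≠ x) (ha : a ∈ compress {x} {j} s) :
    a ∈ s := by
  unfold compress at ha
  split_ifs at ha
  · simp only [sup_eq_union, mem_sdiff, mem_union, mem_singleton] at ha
    exact ha.1.resolve_right hax
  · exact ha

theorem compression_singleton_subset_powersetCard {U : Finset α} {r : ℕ} (hx : x ∈ U)
    (h𝒜 : 𝒜 ⊆ U.powersetCard r) : 𝓒 {x} {j} 𝒜 ⊆ U.powersetCard r := by
  intro s hs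
  rcases mem_compression.1 hs with ⟨hs, -⟩ | ⟨-, b, hb, rfl⟩
  · exact h𝒜 hs
  obtain ⟨hbU, hbr⟩ := mem_powersetCard.1 (h𝒜 hb)
  refine mem_powersetCard.2 ⟨fun y hy ↦ ?_, by rw [card_compress (by simp), hbr]⟩
  by_cases hyx : y = x
  · exact hyx ▸ hx
  · exact hbU (mem_of_mem_compress_singleton hyx hy)

theorem card_filter_mem_compression_lt (hs : s ∈ 𝒜) (hcs : compress {x} {j} s ∉ 𝒜) :
    #{t ∈ 𝓒 {x} {j} 𝒜 | j ∈ t} < #{t ∈ 𝒜 | j ∈ t} := by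
  have hjs : j ∈ s := by
    by_contra hjs
    rw [compress_singleton_of_notMem hjs] at hcs
    exact hcs hs
  refine card_lt_card ⟨fun t ht ↦ ?_, fun hsub ↦ ?_⟩
  · rw [mem_filter] at ht ⊢
    exact ⟨mem_of_mem_compression ht.1 (singleton_subset_iff.2 ht.2) (by simp), ht.2⟩
  · have := (mem_filter.1 (hsub (mem_filter.2 ⟨hs, hjs⟩))).1
    rw [mem_compression] at this
    tauto

theorem intersecting_compression_singleton (h𝒜 : (𝒜 : Set (Finset α)).Intersecting) :
    (𝓒 {x} {j} 𝒜 : Set (Finset α)).Intersecting := by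
  intro A hA B hB hAB
  wlog hxB : x ∉ B generalizing A B
  · by_cases hxA : x ∈ A
    · exact disjoint_left.1 hAB hxA (not_not.1 hxB)
    · exact this hB hA hAB.symm hxA
  have hBF : B ∈ 𝒜 := by
    by_contra hBF
    exact hxB (singleton_subset_iff.1 (le_of_mem_compression_of_notMem hB hBF))
  by_cases hAF : A ∈ 𝒜
  · exact h𝒜 hAF hBF hAB
  -- `A` is the shift of `A' = A - x + j`; as `A'` meets `B` only at `j`, the shift `B - j + x`
  -- of `B` lies in `𝒜` and is disjoint from `A'`.
  have hA' := sup_sdiff_mem_of_mem_compression_of_notMem hA hAF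
  have hjB : j ∈ B := by
    by_contra hjB
    refine h𝒜 hA' hBF (disjoint_left.2 fun y hy hyB ↦ ?_)
    simp only [sup_eq_union, mem_sdiff, mem_union, mem_singleton] at hy
    rcases hy.1 with hyA | rfl
    · exact disjoint_left.1 hAB hyA hyB
    · exact hjB hyB
  have hB' := sup_sdiff_mem_of_mem_compression hB (singleton_subset_iff.2 hjB)
    (disjoint_singleton_left.2 hxB)
  refine h𝒜 hA' hB' (disjoint_left.2 fun y hy hy' ↦ ?_)
  simp only [sup_eq_union, mem_sdiff, mem_union, mem_singleton] at hy hy'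
  rcases hy'.1 with hyB | rfl
  · rcases hy.1 with hyA | rfl
    · exact disjoint_left.1 hAB hyA hyB
    · exact hy'.2 rfl
  · exact hy.2 rfl

end UV

open UV

section Shifting

variable {U : Finset α} {𝒜 : Finset (Finset α)} {r : ℕ} {x j : α}

theorem intersecting_memberSubfamily_of_forall_compress_mem (h𝒜U : 𝒜 ⊆ U.powersetCard r)
    (h𝒜 : (𝒜 : Set (Finset α)).Intersecting) (hr : 2 * r < #U)
    (hcomp : ∀ x ∈ U, ∀ s ∈ 𝒜, compress {x} {j} s ∈ 𝒜) :
    (𝒜.memberSubfamily j : Set (Finset α)).Intersecting := by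
  intro s hs t ht hst
  rw [mem_coe, mem_memberSubfamily] at hs ht
  obtain ⟨z, hzU, hz⟩ := exists_mem_notMem_of_card_lt_card (s := insert j s ∪ insert j t) (t := U)
    (by
      have := card_union_le (insert j s) (insert j t)
      rw [(mem_powersetCard.1 (h𝒜U hs.1)).2, (mem_powersetCard.1 (h𝒜U ht.1)).2] at this
      omega)
  rw [mem_union, not_or] at hz
  -- Shifting `insert j s` to `z ∉ insert j s ∪ insert j t` gives a member missing `insert j t`.
  have hzs := hcomp z hzU _ hs.1
  rw [compress_singleton_insert hz.1 hs.2] at hzs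
  exact h𝒜 hzs ht.1 (disjoint_insert_left.2 ⟨hz.2, disjoint_insert_right.2 ⟨hs.2, hst⟩⟩)

theorem card_memberSubfamily_eq_of_intersecting (hj : j ∈ U) (hr : 2 * r < #U)
    (h𝒜U : 𝒜 ⊆ U.powersetCard r) (h𝒜 : (𝒜 : Set (Finset α)).Intersecting)
    (hM : (𝒜.memberSubfamily j : Set (Finset α)).Intersecting)
    (hcard : #𝒜 = (#U - 1).choose (r - 1)) (hr2 : 2 ≤ r) :
    #(𝒜.memberSubfamily j) = (#(U.erase j) - 1).choose (r - 1 - 1) := by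
  have hUj : #(U.erase j) = #U - 1 := card_erase_of_mem hj
  have hM_le := erdos_ko_rado_of_subset_powersetCard (memberSubfamily_subset_powersetCard h𝒜U) hM
    (by omega)
  have hN_le := erdos_ko_rado_of_subset_powersetCard
    (nonMemberSubfamily_subset_powersetCard (j := j) h𝒜U)
    (h𝒜.mono (coe_subset.2 (filter_subset _ _))) (by omega)
  have hsplit := card_memberSubfamily_add_card_nonMemberSubfamily j 𝒜
  have pascal : (#U - 1).choose (r - 1) =
      (#U - 1 - 1).choose (r - 1 - 1) + (#U - 1 - 1).choose (r - 1) := by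
    obtain ⟨m, hm⟩ : ∃ m, #U - 1 = m + 1 := ⟨#U - 2, by omega⟩
    obtain ⟨k, hk⟩ : ∃ k, r - 1 = k + 1 := ⟨r - 2, by omega⟩
    rw [hm, hk, Nat.choose_succ_succ']
    simp
  rw [hUj] at hM_le hN_le ⊢
  omega

theorem exists_mem_of_forall_compress_mem (hj : j ∈ U) (hr : 2 * r < #U) (hr2 : 2 ≤ r)
    (h𝒜U : 𝒜 ⊆ U.powersetCard r) (h𝒜 : (𝒜 : Set (Finset α)).Intersecting)
    (hcard : #𝒜 = (#U - 1).choose (r - 1))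
    (hcomp : ∀ x ∈ U, ∀ s ∈ 𝒜, compress {x} {j} s ∈ 𝒜)
    (hlink : ∀ 𝒢 ⊆ (U.erase j).powersetCard (r - 1), (𝒢 : Set (Finset α)).Intersecting →
      #𝒢 = (#(U.erase j) - 1).choose (r - 1 - 1) → ∃ a ∈ U.erase j, ∀ s ∈ 𝒢, a ∈ s) :
    ∃ a ∈ U, ∀ s ∈ 𝒜, a ∈ s := by
  have hMU := memberSubfamily_subset_powersetCard (j := j) h𝒜U
  have hM := intersecting_memberSubfamily_of_forall_compress_mem h𝒜U h𝒜 hr hcomp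
  have hMcard := card_memberSubfamily_eq_of_intersecting hj hr h𝒜U h𝒜 hM hcard hr2
  obtain ⟨a, haU, ha⟩ := hlink _ hMU hM hMcard
  have hMfull := eq_filter_mem_of_card_eq_choose haU (by omega) hMU ha hMcard
  refine ⟨a, mem_of_mem_erase haU, fun s hs ↦ ?_⟩
  by_cases hjs : j ∈ s
  · refine mem_of_mem_erase (ha _ (mem_memberSubfamily.2 ⟨?_, notMem_erase j s⟩))
    rwa [insert_erase hjs]
  -- Otherwise `s` misses a member `insert j (insert a t)` of `𝒜`.
  by_contra has
  obtain ⟨t, ht, hst⟩ := exists_mem_powersetCard_disjoint (s := s) (U := (U.erase j).erase a)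
    (k := r - 2) (by
      rw [card_erase_of_mem haU, card_erase_of_mem hj, (mem_powersetCard.1 (h𝒜U hs)).2]
      omega)
  rw [mem_powersetCard] at ht
  have hat : a ∉ t := fun h ↦ (mem_erase.1 (ht.1 h)).1 rfl
  have hinsert : insert a t ∈ 𝒜.memberSubfamily j := by
    rw [hMfull, mem_filter, mem_powersetCard, card_insert_of_notMem hat, ht.2]
    exact ⟨⟨insert_subset haU (ht.1.trans (erase_subset a _)), by omega⟩, mem_insert_self a t⟩
  exact h𝒜 hs (mem_memberSubfamily.1 hinsert).1
    (disjoint_insert_right.2 ⟨hjs, disjoint_insert_right.2 ⟨has, hst⟩⟩)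

theorem insert_mem_of_disjoint_of_compression_eq_filter (hxU : x ∈ U) (hxj : x ≠ j)
    (hr1 : 1 ≤ r) (h𝒜 : (𝒜 : Set (Finset α)).Intersecting)
    (hstar : 𝓒 {x} {j} 𝒜 = {s ∈ U.powersetCard r | x ∈ s}) {s t : Finset α} (hxs : x ∉ s)
    (ht : t ∈ ((U.erase x).erase j).powersetCard (r - 1)) (hst : Disjoint s t)
    (hjs : insert j s ∈ 𝒜) : insert j t ∈ 𝒜 := by
  obtain ⟨htW, htr⟩ := mem_powersetCard.1 ht
  have htU : t ⊆ U := htW.trans ((erase_subset j _).trans (erase_subset x U))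
  have hxt : x ∉ t := fun h ↦ (mem_erase.1 (mem_of_mem_erase (htW h))).1 rfl
  have hjt : j ∉ t := fun h ↦ (mem_erase.1 (htW h)).1 rfl
  -- `insert x t` lies in the compression but misses `insert j s`, so it is a shifted set.
  have hmem : insert x t ∈ 𝓒 {x} {j} 𝒜 := by
    rw [hstar, mem_filter, mem_powersetCard, card_insert_of_notMem hxt, htr]
    exact ⟨⟨insert_subset hxU htU, by omega⟩, mem_insert_self x t⟩
  have hnotMem : insert x t ∉ 𝒜 := fun h ↦ h𝒜 h hjs <| disjoint_insert_left.2
    ⟨fun h' ↦ hxs ((mem_insert.1 h').resolve_left hxj), disjoint_insert_right.2 ⟨hjt, hst.symm⟩⟩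
  convert sup_sdiff_mem_of_mem_compression_of_notMem hmem hnotMem using 1
  ext y
  simp only [sup_eq_union, mem_sdiff, mem_union, mem_insert, mem_singleton]
  grind

theorem forall_mem_or_forall_mem_of_compression_eq_filter (hxU : x ∈ U) (hxj : x ≠ j)
    (hr : 2 * r < #U) (hr1 : 1 ≤ r) (h𝒜U : 𝒜 ⊆ U.powersetCard r)
    (h𝒜 : (𝒜 : Set (Finset α)).Intersecting)
    (hstar : 𝓒 {x} {j} 𝒜 = {s ∈ U.powersetCard r | x ∈ s}) :
    (∀ s ∈ 𝒜, x ∈ s) ∨ ∀ s ∈ 𝒜, j ∈ s := by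
  refine or_iff_not_imp_left.2 fun hx ↦ ?_
  obtain ⟨s₀, hs₀, hxs₀⟩ : ∃ s ∈ 𝒜, x ∉ s := by simpa using hx
  obtain ⟨hs₀U, hs₀r⟩ := mem_powersetCard.1 (h𝒜U hs₀)
  have hjs₀ : j ∈ s₀ := by
    by_contra hjs₀
    have := compress_mem_compression (u := {x}) (v := {j}) hs₀
    rw [compress_singleton_of_notMem hjs₀, hstar, mem_filter] at this
    exact hxs₀ this.2
  set W := (U.erase x).erase j
  have hWcard : #W = #U - 2 := by
    rw [card_erase_of_mem (mem_erase.2 ⟨hxj.symm, hs₀U hjs₀⟩), card_erase_of_mem hxU]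
    omega
  have hs₀W : s₀.erase j ∈ W.powersetCard (r - 1) := by
    refine mem_powersetCard.2 ⟨fun y hy ↦ ?_, by rw [card_erase_of_mem hjs₀, hs₀r]⟩
    obtain ⟨hyj, hys₀⟩ := mem_erase.1 hy
    exact mem_erase.2 ⟨hyj, mem_erase.2 ⟨ne_of_mem_of_not_mem hys₀ hxs₀, hs₀U hys₀⟩⟩
  have hall : ∀ t ∈ W.powersetCard (r - 1), insert j t ∈ 𝒜 :=
    powersetCard_induction_on_disjoint (by omega)
      (fun s hs t ht hst hjs ↦ insert_mem_of_disjoint_of_compression_eq_filter hxU hxj hr1 h𝒜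
        hstar (fun h ↦ (mem_erase.1 (mem_of_mem_erase ((mem_powersetCard.1 hs).1 h))).1 rfl)
        ht hst hjs)
      hs₀W (by rwa [insert_erase hjs₀])
  intro s hs
  by_contra hjs
  obtain ⟨t, ht, hst⟩ := exists_mem_powersetCard_disjoint (s := s) (U := W) (k := r - 1) (by
    rw [hWcard, (mem_powersetCard.1 (h𝒜U hs)).2]
    omega)
  exact h𝒜 hs (hall t ht) (disjoint_insert_right.2 ⟨hjs, hst⟩)

theorem exists_mem_of_forall_mem_compression (hxU : x ∈ U) (hjU : j ∈ U) (hxj : x ≠ j)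
    (hr : 2 * r < #U) (hr1 : 1 ≤ r) (h𝒜U : 𝒜 ⊆ U.powersetCard r)
    (h𝒜 : (𝒜 : Set (Finset α)).Intersecting) (hcard : #𝒜 = (#U - 1).choose (r - 1))
    {a : α} (haU : a ∈ U) (ha : ∀ s ∈ 𝓒 {x} {j} 𝒜, a ∈ s) :
    ∃ b ∈ U, ∀ s ∈ 𝒜, b ∈ s := by
  by_cases hax : a = x
  · subst hax
    have hstar := eq_filter_mem_of_card_eq_choose haU hr1
      (compression_singleton_subset_powersetCard haU h𝒜U) ha (by rw [card_compression, hcard])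
    rcases forall_mem_or_forall_mem_of_compression_eq_filter haU hxj hr hr1 h𝒜U h𝒜 hstar with
      h | h
    · exact ⟨a, haU, h⟩
    · exact ⟨j, hjU, h⟩
  · exact ⟨a, haU, fun s hs ↦
      mem_of_mem_compress_singleton hax (ha _ (compress_mem_compression hs))⟩

end Shifting

theorem exists_mem_of_intersecting_of_card_eq_choose {U : Finset α} {𝒜 : Finset (Finset α)}
    {r : ℕ} (h𝒜U : 𝒜 ⊆ U.powersetCard r) (h𝒜 : (𝒜 : Set (Finset α)).Intersecting)
    (hr : 2 * r < #U) (hcard : #𝒜 = (#U - 1).choose (r - 1)) :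
    ∃ a ∈ U, ∀ s ∈ 𝒜, a ∈ s := by
  induction hn : #U using Nat.strong_induction_on generalizing U r 𝒜 with
  | _ n ihU =>
  rcases le_or_gt r 1 with hr1 | hr2
  · obtain ⟨s, rfl⟩ :=
      card_eq_one.1 (by rw [hcard, Nat.sub_eq_zero_of_le hr1, Nat.choose_zero_right])
    obtain ⟨a, ha⟩ := nonempty_iff_ne_empty.2 (h𝒜.ne_bot (mem_singleton_self s))
    exact ⟨a, (mem_powersetCard.1 (h𝒜U (mem_singleton_self s))).1 ha, by simpa using ha⟩
  obtain ⟨j, hj⟩ : U.Nonempty := card_pos.1 (by omega)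
  induction hd : #{s ∈ 𝒜 | j ∈ s} using Nat.strong_induction_on generalizing 𝒜 with
  | _ d ihd =>
  by_cases hcomp : ∀ x ∈ U, ∀ s ∈ 𝒜, compress {x} {j} s ∈ 𝒜
  · refine exists_mem_of_forall_compress_mem hj hr hr2 h𝒜U h𝒜 hcard hcomp
      fun 𝒢 h𝒢U h𝒢 h𝒢card ↦ ihU _ ?_ h𝒢U h𝒢 ?_ h𝒢card rfl
    all_goals rw [card_erase_of_mem hj]; omega
  obtain ⟨x, hxU, s, hs, hcs⟩ : ∃ x ∈ U, ∃ s ∈ 𝒜, compress {x} {j} s ∉ 𝒜 := by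
    simpa using hcomp
  have hxj : x ≠ j := by
    rintro rfl
    exact hcs (by rwa [compress_self])
  obtain ⟨a, haU, ha⟩ := ihd _ (hd ▸ card_filter_mem_compression_lt hs hcs)
    (compression_singleton_subset_powersetCard hxU h𝒜U) (intersecting_compression_singleton h𝒜)
    (by rwa [card_compression]) rfl
  exact exists_mem_of_forall_mem_compression hxU hj hxj hr hr2.le h𝒜U h𝒜 hcard haU ha

/-- **Erdős–Ko–Rado uniqueness.** If `r < n/2` and `𝓕` is an intersecting
family of `r`-element subsets of `{1, …, n}` with `|𝓕| = C(n-1, r-1)`, then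
all sets of `𝓕` share a common element. -/
theorem erdos_ko_rado_uniqueness (n r : ℕ) (hr : 2 * r < n)
    (𝓕 : Finset (Finset (Fin n)))
    (hcard : ∀ s ∈ 𝓕, s.card = r)
    (hint : ∀ s ∈ 𝓕, ∀ t ∈ 𝓕, (s ∩ t).Nonempty)
    (hmax : 𝓕.card = (n - 1).choose (r - 1)) :
    ∃ a : Fin n, ∀ s ∈ 𝓕, a ∈ s := by
  obtain ⟨a, -, ha⟩ := exists_mem_of_intersecting_of_card_eq_choose (U := univ)
    (fun s hs ↦ mem_powersetCard.2 ⟨subset_univ s, hcard s hs⟩)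
    (fun s hs t ht ↦ not_disjoint_iff_nonempty_inter.2 (hint s hs t ht))
    (by simpa using hr) (by simpa using hmax)
  exact ⟨a, ha⟩
end

section
/- (Erdős–Ko–Rado theorem for exterior algebras) Suppose r < n/2. If W is a self-annihilating subspace of Λʳ(ℝⁿ), then dim W ≤ C(n−1, r−1), where C denotes the binomial coefficient. -/
/-!
Index the basis `e_S` of the exterior algebra by finsets `S` and order them colexicographically.
If `S` and `T` are disjoint colex-leading indices of `x` and `y`, the coefficient of `e_{S ∪ T}` in
`x * y` is `± x_S y_T ≠ 0`: a pair of disjoint `S' ≤ S`, `T' ≤ T` with the same union must be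
`(S, T)` itself, because taking complements inside `S ∪ T` reverses the colex order. So in a
self-annihilating `W ≤ Λʳ` the leading indices form an intersecting family of `r`-sets. A nonzero
`w ∈ W` has a nonzero coordinate on this family, hence `dim W` is at most its size, which the
Erdős–Ko–Rado theorem bounds by `C(n-1, r-1)`.
-/

open Finset Module Finset.Colex

namespace Finset.Colex

variable {α : Type*} [LinearOrder α]

lemma toColex_sdiff_le_toColex_sdiff_iff_of_subset {s t u : Finset α} (hs : s ⊆ u) (ht : t ⊆ u) :
    toColex (u \ s) ≤ toColex (u \ t) ↔ toColex t ≤ toColex s := by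
  rw [← toColex_sdiff_le_toColex_sdiff', ← toColex_sdiff_le_toColex_sdiff' (s := t),
    sdiff_sdiff_sdiff_cancel_left ht, sdiff_sdiff_sdiff_cancel_left hs]

lemma eq_and_eq_of_union_eq_of_toColex_le {s t s' t' : Finset α} (hst : Disjoint s t)
    (hst' : Disjoint s' t') (hu : s' ∪ t' = s ∪ t) (hs : toColex s' ≤ toColex s)
    (ht : toColex t' ≤ toColex t) : s' = s ∧ t' = t := by
  have ht_eq : t' = t := by
    refine toColex_inj.1 (le_antisymm ht ?_)
    rw [← union_sdiff_cancel_left hst, ← union_sdiff_cancel_left hst', hu]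
    exact (toColex_sdiff_le_toColex_sdiff_iff_of_subset subset_union_left
      (hu ▸ subset_union_left)).2 hs
  refine ⟨?_, ht_eq⟩
  rw [← union_sdiff_cancel_right hst, ← union_sdiff_cancel_right hst', hu, ht_eq]

end Finset.Colex

namespace Module.Basis

variable {R V I : Type*} [Semiring R] [AddCommMonoid V] [Module R V] [LinearOrder I]

def IsColexLeading (B : Basis (Finset I) R V) (x : V) (s : Finset I) : Prop :=
  B.repr x s ≠ 0 ∧ ∀ t, B.repr x t ≠ 0 → toColex t ≤ toColex s

lemma exists_isColexLeading (B : Basis (Finset I) R V) {x : V} (hx : x ≠ 0) :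
    ∃ s, B.IsColexLeading x s := by
  have hsupp : (B.repr x).support.Nonempty :=
    Finsupp.support_nonempty_iff.2 (B.repr.map_ne_zero_iff.2 hx)
  obtain ⟨s, hs, hmax⟩ := (B.repr x).support.exists_max_image toColex hsupp
  exact ⟨s, Finsupp.mem_support_iff.1 hs, fun t ht => hmax t (Finsupp.mem_support_iff.2 ht)⟩

lemma finrank_le_card_of_forall_exists_repr_ne_zero {K V ι : Type*} [Field K]
    [AddCommGroup V] [Module K V] (B : Basis ι K V) (W : Submodule K V) (F : Finset ι)
    (h : ∀ w ∈ W, w ≠ 0 → ∃ i ∈ F, B.repr w i ≠ 0) : finrank K W ≤ #F := by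
  let restrict : W →ₗ[K] F → K := LinearMap.pi fun i => (B.coord i).comp W.subtype
  have hinj : Function.Injective restrict := by
    rw [← LinearMap.ker_eq_bot, LinearMap.ker_eq_bot']
    intro w hw
    by_contra hw0
    obtain ⟨i, hi, hne⟩ := h w w.2 (by simpa using hw0)
    exact hne (congrFun hw ⟨i, hi⟩)
  simpa using LinearMap.finrank_le_finrank_of_injective hinj

end Module.Basis

namespace ExteriorAlgebra

open Set.powersetCard

section Ring

variable {R M I : Type*} [CommRing R] [AddCommGroup M] [Module R M] [LinearOrder I]
  (b : Basis I R M)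

lemma basis_mul_basis_of_disjoint {s t : Finset I} (h : Disjoint s t) :
    ∃ ε : ℤˣ, b.ExteriorAlgebra s * b.ExteriorAlgebra t = ε • b.ExteriorAlgebra (s ∪ t) := by
  have := basis_mul_of_disjoint b (ofCard (rfl : s.card = s.card))
    (ofCard (rfl : t.card = t.card)) h
  exact ⟨_, this.trans (by congr 2; exact Finset.disjUnion_eq_union s t h)⟩

lemma basis_mul_basis_of_not_disjoint {s t : Finset I} (h : ¬Disjoint s t) :
    b.ExteriorAlgebra s * b.ExteriorAlgebra t = 0 :=
  basis_mul_of_not_disjoint b (ofCard (rfl : s.card = s.card)) (ofCard (rfl : t.card = t.card)) h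

lemma repr_basis_mul_basis_eq_zero {s t u : Finset I} (h : ¬(Disjoint s t ∧ s ∪ t = u)) :
    b.ExteriorAlgebra.repr (b.ExteriorAlgebra s * b.ExteriorAlgebra t) u = 0 := by
  by_cases hst : Disjoint s t
  · obtain ⟨ε, hε⟩ := basis_mul_basis_of_disjoint b hst
    rw [hε, map_zsmul_unit, Finsupp.smul_apply, Basis.repr_self,
      Finsupp.single_eq_of_ne (fun h' => h ⟨hst, h'.symm⟩), smul_zero]
  · rw [basis_mul_basis_of_not_disjoint b hst, map_zero, Finsupp.zero_apply]

lemma repr_basis_mul_basis_union_ne_zero [Nontrivial R] {s t : Finset I} (h : Disjoint s t) :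
    b.ExteriorAlgebra.repr (b.ExteriorAlgebra s * b.ExteriorAlgebra t) (s ∪ t) ≠ 0 := by
  obtain ⟨ε, hε⟩ := basis_mul_basis_of_disjoint b h
  rw [hε, map_zsmul_unit, Finsupp.smul_apply, Basis.repr_self, Finsupp.single_eq_same]
  rcases Int.units_eq_one_or ε with rfl | rfl <;> simp

lemma card_eq_of_repr_ne_zero {r : ℕ} {x : ExteriorAlgebra R M} (hx : x ∈ ⋀[R]^r M)
    {s : Finset I} (hs : b.ExteriorAlgebra.repr x s ≠ 0) : s.card = r := by
  by_contra hne
  refine hs ?_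
  rw [Basis.ExteriorAlgebra, Basis.repr_reindex_apply, prodEquiv_symm_apply]
  exact DirectSum.IsInternal.collectedBasis_repr_of_mem_ne _ _ (Ne.symm hne) hx

lemma repr_mul_apply_union_of_isColexLeading {x y : ExteriorAlgebra R M} {s t : Finset I}
    (hst : Disjoint s t) (hx : b.ExteriorAlgebra.IsColexLeading x s)
    (hy : b.ExteriorAlgebra.IsColexLeading y t) :
    b.ExteriorAlgebra.repr (x * y) (s ∪ t) = b.ExteriorAlgebra.repr x s *
      b.ExteriorAlgebra.repr y t *
      b.ExteriorAlgebra.repr (b.ExteriorAlgebra s * b.ExteriorAlgebra t) (s ∪ t) := by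
  set B := b.ExteriorAlgebra
  have expand : ∀ z, z = ∑ s ∈ (B.repr z).support, B.repr z s • B s := fun z =>
    (B.linearCombination_repr z).symm.trans (Finsupp.linearCombination_apply _ _)
  have hmul : B.repr (x * y) (s ∪ t) = ∑ s' ∈ (B.repr x).support, ∑ t' ∈ (B.repr y).support,
      B.repr x s' * B.repr y t' * B.repr (B s' * B t') (s ∪ t) := by
    conv_lhs => rw [expand x, expand y]
    simp only [Finset.sum_mul, Finset.mul_sum, smul_mul_smul_comm, map_sum, map_smul,
      Finsupp.finsetSum_apply, Finsupp.smul_apply, smul_eq_mul]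
    exact Finset.sum_comm
  have off_diagonal : ∀ s' ∈ (B.repr x).support, ∀ t' ∈ (B.repr y).support, (s', t') ≠ (s, t) →
      B.repr (B s' * B t') (s ∪ t) = 0 := fun s' hs' t' ht' hne =>
    repr_basis_mul_basis_eq_zero b fun ⟨hd, hu⟩ => hne <| Prod.ext_iff.2 <|
      eq_and_eq_of_union_eq_of_toColex_le hst hd hu
        (hx.2 s' (Finsupp.mem_support_iff.1 hs')) (hy.2 t' (Finsupp.mem_support_iff.1 ht'))
  rw [hmul, Finset.sum_eq_single_of_mem s (Finsupp.mem_support_iff.2 hx.1),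
    Finset.sum_eq_single_of_mem t (Finsupp.mem_support_iff.2 hy.1)]
  · intro t' ht' hne
    rw [off_diagonal s (Finsupp.mem_support_iff.2 hx.1) t' ht' (by simp [hne]), mul_zero]
  · intro s' hs' hne
    exact Finset.sum_eq_zero fun t' ht' => by
      rw [off_diagonal s' hs' t' ht' (by simp [hne]), mul_zero]

lemma mul_ne_zero_of_isColexLeading [IsDomain R] {x y : ExteriorAlgebra R M} {s t : Finset I}
    (hst : Disjoint s t) (hx : b.ExteriorAlgebra.IsColexLeading x s)
    (hy : b.ExteriorAlgebra.IsColexLeading y t) : x * y ≠ 0 := fun hxy => by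
  have h := repr_mul_apply_union_of_isColexLeading b hst hx hy
  rw [hxy, map_zero, Finsupp.zero_apply, eq_comm] at h
  exact mul_ne_zero (mul_ne_zero hx.1 hy.1) (repr_basis_mul_basis_union_ne_zero b hst) h

end Ring

theorem finrank_le_choose_of_forall_mul_eq_zero {K M : Type*} [Field K] [AddCommGroup M]
    [Module K M] {n r : ℕ} (b : Basis (Fin n) K M)
    (hr : 2 * r < n) (W : Submodule K (ExteriorAlgebra K M)) (hWr : W ≤ ⋀[K]^r M)
    (hann : ∀ w₁ ∈ W, ∀ w₂ ∈ W, w₁ * w₂ = 0) :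
    finrank K W ≤ (n - 1).choose (r - 1) := by
  classical
  let F : Finset (Finset (Fin n)) := {s | ∃ w ∈ W, b.ExteriorAlgebra.IsColexLeading w s}
  have hF_intersecting : (F : Set (Finset (Fin n))).Intersecting := by
    intro s hs t ht hst
    obtain ⟨x, hxW, hx⟩ := (mem_filter.1 hs).2
    obtain ⟨y, hyW, hy⟩ := (mem_filter.1 ht).2
    exact mul_ne_zero_of_isColexLeading b hst hx hy (hann x hxW y hyW)
  have hF_sized : (F : Set (Finset (Fin n))).Sized r := by
    intro s hs
    obtain ⟨x, hxW, hx⟩ := (mem_filter.1 hs).2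
    exact card_eq_of_repr_ne_zero b (hWr hxW) hx.1
  have hW_le_F : finrank K W ≤ #F :=
    b.ExteriorAlgebra.finrank_le_card_of_forall_exists_repr_ne_zero W F fun w hw hw0 => by
      obtain ⟨s, hs⟩ := b.ExteriorAlgebra.exists_isColexLeading hw0
      exact ⟨s, mem_filter.2 ⟨mem_univ s, w, hw, hs⟩, hs.1⟩
  exact hW_le_F.trans (erdos_ko_rado hF_intersecting hF_sized (by omega))

end ExteriorAlgebra

/-- **Erdős–Ko–Rado theorem for exterior algebras.** If `r < n/2` and `W` is a
self-annihilating subspace of `Λʳ(ℝⁿ)`, then `dim W ≤ C(n-1, r-1)`. -/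
theorem ekr_exterior_algebra (n r : ℕ) (hr : 2 * r < n)
    (W : Submodule ℝ (ExteriorAlgebra ℝ (Fin n → ℝ)))
    (hWr : W ≤ ⋀[ℝ]^r (Fin n → ℝ))
    (hann : ∀ w₁ ∈ W, ∀ w₂ ∈ W, w₁ * w₂ = 0) :
    Module.finrank ℝ W ≤ (n - 1).choose (r - 1) :=
  ExteriorAlgebra.finrank_le_choose_of_forall_mul_eq_zero (Pi.basisFun ℝ (Fin n)) hr W hWr hann
end
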